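/- Assume λ₂ = 0. Then xQ_n(x) = P_{n+1}(x) + b_n P_{n-1}(x) for n ≥ 1, where b_n = k̂_n / k_{n-1}, with k_n = ⟨P_n,P_n⟩_F and k̂_n = ⟨Q_n,Q_n⟩_S. -/

import Mathlib

open Polynomial MeasureTheory Filter Topology

/-- The Freud inner product `⟨f,g⟩_F = ∫_ℝ f(x) g(x) e^{-x⁴} dx`. -/
noncomputable def innerF (f g : Polynomial ℝ) : ℝ :=
  ∫ x : ℝ, f.eval x * g.eval x * Real.exp (-x ^ 4)


/-- The Sobolev inner product
`⟨f,g⟩_S = ⟨f,g⟩_F + λ₁ f(0) g(0) + λ₂ f'(0) g'(0)`. -/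
noncomputable def innerS (l1 l2 : ℝ) (f g : Polynomial ℝ) : ℝ :=
  innerF f g + l1 * f.eval 0 * g.eval 0
    + l2 * (Polynomial.derivative f).eval 0 * (Polynomial.derivative g).eval 0

/-!
Both inner products are positive definite and invariant under `x ↦ -x`, so monic orthogonal
polynomials are unique and therefore have the parity of their degree. The difference
`x Q_n - P_{n+1} - b_n P_{n-1}` has degree at most `n` and is Freud-orthogonal to every `x^m`,
`m ≤ n`. Indeed `⟨x Q_n, x^m⟩_F = ⟨Q_n, x^{m+1}⟩_S` because `x^{m+1}` vanishes at `0`; this is `0`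
for `m + 1 < n`, equals `k̂_n` for `m = n - 1`, and vanishes by parity for `m = n`, while
`⟨P_{n-1}, x^m⟩_F` is `k_{n-1}` for `m = n - 1` and `0` otherwise. Hence the difference is `0`.
-/

namespace Polynomial

variable {R : Type*} [CommRing R] {n : ℕ} {p q : R[X]}

theorem Monic.sub_mem_degreeLT (hp : p.Monic) (hq : q.Monic) (hpn : p.natDegree = n)
    (hqn : q.natDegree = n) : p - q ∈ degreeLT R n := by
  nontriviality R
  rw [mem_degreeLT, ← hpn, ← degree_eq_natDegree hp.ne_zero]
  exact degree_sub_lt_left (by rw [degree_eq_natDegree hp.ne_zero, degree_eq_natDegree hq.ne_zero,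
    hpn, hqn]) hp.ne_zero (by rw [hp.leadingCoeff, hq.leadingCoeff])

theorem X_pow_comp_neg_X (m : ℕ) : (X ^ m : R[X]).comp (-X) = (-1 : R) ^ m • X ^ m := by
  rw [X_pow_comp, neg_pow, ← C_mul', C_pow, C_neg, C_1]

end Polynomial

namespace LinearMap.BilinForm

variable {R : Type*} [CommRing R] {B : LinearMap.BilinForm R R[X]} {n : ℕ} {p q : R[X]}

structure IsMonicOrthogonal (B : LinearMap.BilinForm R R[X]) (n : ℕ) (p : R[X]) : Prop where
  monic : p.Monic
  natDegree_eq : p.natDegree = n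
  apply_X_pow : ∀ m < n, B p (X ^ m) = 0

theorem apply_eq_zero_of_mem_degreeLT (h : ∀ m < n, B p (X ^ m) = 0) (hq : q ∈ degreeLT R n) :
    B p q = 0 := by
  classical
  rw [degreeLT_eq_span_X_pow] at hq
  refine (Submodule.span_le (p := LinearMap.ker (B p))).mpr ?_ hq
  simpa [Set.subset_def] using h

theorem eq_zero_of_mem_degreeLT (hB : ∀ r, B r r = 0 → r = 0) (hp : p ∈ degreeLT R n)
    (h : ∀ m < n, B p (X ^ m) = 0) : p = 0 :=
  hB p (apply_eq_zero_of_mem_degreeLT h hp)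

theorem apply_X_pow_eq_zero_of_odd_add [IsAddTorsionFree R]
    (hR : ∀ f g, B (f.comp (-X)) (g.comp (-X)) = B f g) {a b : ℕ}
    (hp : p.comp (-X) = (-1 : R) ^ a • p) (hab : Odd (a + b)) : B p (X ^ b) = 0 := by
  have h := hR p (X ^ b)
  rw [hp, X_pow_comp_neg_X, map_smul, LinearMap.map_smul₂, smul_smul, ← pow_add, add_comm,
    hab.neg_one_pow, neg_one_smul] at h
  exact self_eq_neg.mp h.symm

namespace IsMonicOrthogonal

theorem eq (hB : ∀ r, B r r = 0 → r = 0) (hp : IsMonicOrthogonal B n p)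
    (hq : IsMonicOrthogonal B n q) : p = q :=
  sub_eq_zero.mp <| eq_zero_of_mem_degreeLT hB
    (hp.monic.sub_mem_degreeLT hq.monic hp.natDegree_eq hq.natDegree_eq) fun m hm => by
      rw [map_sub, LinearMap.sub_apply, hp.apply_X_pow m hm, hq.apply_X_pow m hm, sub_zero]

theorem apply_self [Nontrivial R] (hp : IsMonicOrthogonal B n p) : B p p = B p (X ^ n) := by
  have h := apply_eq_zero_of_mem_degreeLT hp.apply_X_pow
    (hp.monic.sub_mem_degreeLT (monic_X_pow n) hp.natDegree_eq (natDegree_X_pow n))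
  rwa [map_sub, sub_eq_zero] at h

theorem comp_neg_X (hB : ∀ r, B r r = 0 → r = 0)
    (hR : ∀ f g, B (f.comp (-X)) (g.comp (-X)) = B f g) (hp : IsMonicOrthogonal B n p) :
    p.comp (-X) = (-1 : R) ^ n • p := by
  have hflip : IsMonicOrthogonal B n ((-1 : R) ^ n • p.comp (-X)) := by
    refine ⟨?_, ?_, fun m hm => ?_⟩
    · rw [← hp.natDegree_eq]
      simpa [← C_mul'] using hp.monic.neg_one_pow_natDegree_mul_comp_neg_X
    · rw [natDegree_smul_of_smul_regular _ ((isUnit_neg_one.pow n).isSMulRegular R),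
        natDegree_eq_of_degree_eq degree_comp_neg_X, hp.natDegree_eq]
    · rw [map_smul, LinearMap.smul_apply, ← hR, comp_neg_X_comp_neg_X, X_pow_comp_neg_X, map_smul,
        hp.apply_X_pow m hm, smul_zero, smul_zero]
  conv_rhs => rw [hp.eq hB hflip]
  rw [smul_smul, ← mul_pow, neg_one_mul, neg_neg, one_pow, one_smul]

end IsMonicOrthogonal

end LinearMap.BilinForm

theorem integrable_pow_mul_exp_neg_pow_four (m : ℕ) :
    Integrable fun x : ℝ => x ^ m * Real.exp (-x ^ 4) := by
  have hgauss : Integrable fun x : ℝ => x ^ m * Real.exp (-1 * x ^ 2) := by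
    simpa using integrable_rpow_mul_exp_neg_mul_sq one_pos (s := m)
      (neg_one_lt_zero.trans_le m.cast_nonneg)
  refine (hgauss.norm.const_mul (Real.exp (1 / 4))).mono' (by fun_prop) (ae_of_all _ fun x => ?_)
  have hexp : Real.exp (-x ^ 4) ≤ Real.exp (1 / 4) * Real.exp (-1 * x ^ 2) := by
    rw [← Real.exp_add]
    exact Real.exp_le_exp.mpr (by nlinarith [sq_nonneg (x ^ 2 - 1 / 2)])
  simp only [norm_mul, Real.norm_eq_abs, abs_of_pos (Real.exp_pos _)]
  nlinarith [abs_nonneg (x ^ m)]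

theorem integrable_eval_mul_exp_neg_pow_four (p : ℝ[X]) :
    Integrable fun x : ℝ => p.eval x * Real.exp (-x ^ 4) := by
  induction p using Polynomial.induction_on' with
  | add p q hp hq =>
    simp only [eval_add, add_mul]
    exact hp.add hq
  | monomial m a =>
    simpa only [eval_monomial, mul_assoc] using (integrable_pow_mul_exp_neg_pow_four m).const_mul a

theorem innerF_comm (f g : ℝ[X]) : innerF f g = innerF g f := by
  simp only [innerF, mul_comm (f.eval _)]

theorem innerF_add_left (f₁ f₂ g : ℝ[X]) : innerF (f₁ + f₂) g = innerF f₁ g + innerF f₂ g := by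
  have hint (f : ℝ[X]) : Integrable fun x : ℝ => f.eval x * g.eval x * Real.exp (-x ^ 4) := by
    simpa only [eval_mul] using integrable_eval_mul_exp_neg_pow_four (f * g)
  simp only [innerF, eval_add, add_mul]
  exact integral_add (hint f₁) (hint f₂)

theorem innerF_smul_left (c : ℝ) (f g : ℝ[X]) : innerF (c • f) g = c * innerF f g := by
  simp only [innerF, eval_smul, smul_eq_mul, ← integral_const_mul, mul_assoc]

noncomputable def freudForm : LinearMap.BilinForm ℝ ℝ[X] :=
  LinearMap.mk₂ ℝ innerF innerF_add_left innerF_smul_left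
    (fun f g₁ g₂ => by simp only [innerF_comm f, innerF_add_left])
    (fun c f g => by simp only [innerF_comm f, innerF_smul_left, smul_eq_mul])

@[simp]
theorem freudForm_apply (f g : ℝ[X]) : freudForm f g = innerF f g := rfl

theorem freudForm_X_mul_left (f g : ℝ[X]) : freudForm (X * f) g = freudForm f (X * g) := by
  simp only [freudForm_apply, innerF, eval_mul, eval_X]
  congr 1 with x
  ring

theorem freudForm_comp_neg_X (f g : ℝ[X]) :
    freudForm (f.comp (-X)) (g.comp (-X)) = freudForm f g := by
  simp only [freudForm_apply, innerF, eval_comp, eval_neg, eval_X]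
  rw [← integral_neg_eq_self]
  simp only [neg_neg, (by decide : Even 4).neg_pow]

theorem freudForm_self_pos {p : ℝ[X]} (hp : p ≠ 0) : 0 < freudForm p p := by
  obtain ⟨x, hx⟩ : ∃ x, p.eval x ≠ 0 := by
    by_contra! h
    exact hp (Polynomial.funext fun x => by simp [h x])
  refine integral_pos_of_integrable_nonneg_nonzero (x := x) (by fun_prop)
    (by simpa only [eval_mul] using integrable_eval_mul_exp_neg_pow_four (p * p))
    (fun y => mul_nonneg (mul_self_nonneg _) (Real.exp_pos _).le)
    (mul_ne_zero (mul_self_ne_zero.mpr hx) (Real.exp_pos _).ne')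

theorem freudForm_anisotropic (p : ℝ[X]) (hp : freudForm p p = 0) : p = 0 := by
  by_contra hne
  exact (freudForm_self_pos hne).ne' hp

noncomputable def sobolevForm (l1 l2 : ℝ) : LinearMap.BilinForm ℝ ℝ[X] :=
  freudForm + l1 • (LinearMap.mul ℝ ℝ).compl₁₂ (leval 0) (leval 0)
    + l2 • (LinearMap.mul ℝ ℝ).compl₁₂ (leval 0 ∘ₗ derivative) (leval 0 ∘ₗ derivative)

@[simp]
theorem sobolevForm_apply (l1 l2 : ℝ) (f g : ℝ[X]) : sobolevForm l1 l2 f g = innerS l1 l2 f g := by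
  simp only [sobolevForm, LinearMap.add_apply, LinearMap.smul_apply, freudForm_apply,
    LinearMap.compl₁₂_apply, leval_apply, LinearMap.mul_apply_apply, smul_eq_mul,
    LinearMap.coe_comp, Function.comp_apply, innerS]
  ring

theorem sobolevForm_comp_neg_X (l1 l2 : ℝ) (f g : ℝ[X]) :
    sobolevForm l1 l2 (f.comp (-X)) (g.comp (-X)) = sobolevForm l1 l2 f g := by
  have := freudForm_comp_neg_X f g
  simp only [freudForm_apply] at this
  simp [innerS, this, derivative_comp]

theorem sobolevForm_anisotropic {l1 l2 : ℝ} (hl1 : 0 ≤ l1) (hl2 : 0 ≤ l2) (p : ℝ[X])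
    (hp : sobolevForm l1 l2 p p = 0) : p = 0 := by
  by_contra hne
  have := freudForm_self_pos hne
  rw [sobolevForm_apply, innerS] at hp
  rw [freudForm_apply] at this
  nlinarith [mul_nonneg hl1 (mul_self_nonneg (p.eval 0)),
    mul_nonneg hl2 (mul_self_nonneg ((derivative p).eval 0))]

theorem freudForm_X_mul_X_pow (l1 : ℝ) (q : ℝ[X]) (m : ℕ) :
    freudForm (X * q) (X ^ m) = sobolevForm l1 0 q (X ^ (m + 1)) := by
  rw [freudForm_X_mul_left, sobolevForm_apply, innerS, pow_succ']
  simp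

open LinearMap.BilinForm

/-- Case `λ₂ = 0`: `x Q_n = P_{n+1} + b_n P_{n-1}` for `n ≥ 1`, where
`b n = k̂ n / k (n-1)`. -/
theorem sobolev_freud_connection_xQ
    (l1 : ℝ) (hl1 : 0 ≤ l1)
    (P Q : ℕ → Polynomial ℝ) (k khat : ℕ → ℝ)
    (hPmonic : ∀ n, (P n).Monic) (hPdeg : ∀ n, (P n).natDegree = n)
    (hPorth : ∀ n m : ℕ, m < n → innerF (P n) (X ^ m) = 0)
    (hQmonic : ∀ n, (Q n).Monic) (hQdeg : ∀ n, (Q n).natDegree = n)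
    (hQorth : ∀ n m : ℕ, m < n → innerS l1 0 (Q n) (X ^ m) = 0)
    (hk : ∀ n, k n = innerF (P n) (P n))
    (hkhat : ∀ n, khat n = innerS l1 0 (Q n) (Q n))
    (b : ℕ → ℝ) (hb : ∀ n, b n = khat n / k (n - 1)) :
    ∀ n, 1 ≤ n → X * Q n = P (n + 1) + C (b n) * P (n - 1) := by
  intro n hn
  have hP (j : ℕ) : IsMonicOrthogonal freudForm j (P j) := ⟨hPmonic j, hPdeg j, hPorth j⟩
  have hQ (j : ℕ) : IsMonicOrthogonal (sobolevForm l1 0) j (Q j) :=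
    ⟨hQmonic j, hQdeg j, fun m hm => by simpa using hQorth j m hm⟩
  have hdeg : X * Q n - (P (n + 1) + C (b n) * P (n - 1)) ∈ degreeLT ℝ (n + 1) := by
    rw [← sub_sub, C_mul']
    refine sub_mem ((monic_X.mul (hQmonic n)).sub_mem_degreeLT (hPmonic (n + 1)) ?_ (hPdeg _))
      (Submodule.smul_mem _ _ (mem_degreeLT.mpr ?_))
    · rw [monic_X.natDegree_mul (hQmonic n), natDegree_X, hQdeg, add_comm]
    · rw [degree_eq_natDegree (hPmonic _).ne_zero, hPdeg]
      exact_mod_cast (by omega : n - 1 < n + 1)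
  rw [← sub_eq_zero]
  refine eq_zero_of_mem_degreeLT freudForm_anisotropic hdeg fun m hm => ?_
  rw [map_sub, map_add, C_mul', map_smul, LinearMap.sub_apply, LinearMap.add_apply,
    LinearMap.smul_apply, freudForm_X_mul_X_pow l1, (hP (n + 1)).apply_X_pow m hm, zero_add,
    smul_eq_mul]
  obtain hm | hm | hlt : m = n - 1 ∨ m = n ∨ m < n - 1 := by omega
  · subst m
    have hk_ne : k (n - 1) ≠ 0 := (hk _).trans_ne fun h =>
      (hP (n - 1)).monic.ne_zero (freudForm_anisotropic _ h)
    rw [Nat.sub_add_cancel hn, ← (hQ n).apply_self, ← (hP (n - 1)).apply_self, sobolevForm_apply,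
      freudForm_apply, ← hkhat, ← hk, hb, div_mul_cancel₀ _ hk_ne, sub_self]
  · subst m
    have hQparity := (hQ n).comp_neg_X (sobolevForm_anisotropic hl1 le_rfl)
      (sobolevForm_comp_neg_X l1 0)
    have hPparity := (hP (n - 1)).comp_neg_X freudForm_anisotropic freudForm_comp_neg_X
    rw [apply_X_pow_eq_zero_of_odd_add (sobolevForm_comp_neg_X l1 0) hQparity ⟨n, by ring⟩,
      apply_X_pow_eq_zero_of_odd_add freudForm_comp_neg_X hPparity ⟨n - 1, by omega⟩, mul_zero,
      sub_zero]
  · rw [(hQ n).apply_X_pow _ (by omega), (hP (n - 1)).apply_X_pow _ hlt, mul_zero, sub_zero]
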